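/- There exists h̄ > 0 such that for every real p ≥ 1 there is a constant C_p > 0 with: for every integer N ≥ 1 with h = T/N < h̄ and every 0 ≤ n ≤ N, E[(Y^h_n)^p]^{1/p} ≤ C_p, and for every 0 ≤ n ≤ N−1, E[|Y^h_{n+1} − Y^h_n|^p]^{1/p} ≤ C_p √h. -/

import Mathlib

/-!
The square roots of the nodes form a lattice of spacing `σ√h` truncated at `0`, so every move out
of a node `y` has size at most `D √h (1 + y)`, while the clamped probabilities keep the mean of
the next node below `y + κθh`. Expanding `(y + δ) ^ (m + 1)` binomially, the first-order term is
controlled by the mean and the others by `h (1 + y ^ (m + 1))`; hence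
`E[1 + Y_{n+1} ^ (m + 1)] ≤ (1 + K h) E[1 + Y_n ^ (m + 1)]`, and the discrete Gronwall inequality
bounds these moments by `e^{KT} (1 + Y₀ ^ (m + 1))` uniformly in `N`. Taking `m + 1 ≥ p` gives the
`L^p` bound, and together with the pathwise estimate `|Y_{n+1} - Y_n| ≤ D √h (1 + Y_n)` the bound
on the increments.
-/

open MeasureTheory

noncomputable section

open Classical in
/-- The node `y^n_k` of the CIR 'multiple jumps' binomial tree with time step `h`:
`y^n_k = (√Y₀ + (σ/2)(2k-n)√h)²` if `√Y₀ + (σ/2)(2k-n)√h > 0`, and `0` otherwise. -/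
def ynode (σ Y0 h : ℝ) (n k : ℕ) : ℝ :=
  if 0 < Real.sqrt Y0 + σ / 2 * (2 * (k : ℝ) - (n : ℝ)) * Real.sqrt h then
    (Real.sqrt Y0 + σ / 2 * (2 * (k : ℝ) - (n : ℝ)) * Real.sqrt h) ^ 2
  else 0

open Classical in
/-- The 'up' jump index `k_u(n,k)`, with default `n+1` when the set is empty. -/
def kuF (κ θ σ Y0 h : ℝ) (n k : ℕ) : ℕ :=
  if ∃ k' : ℕ, k + 1 ≤ k' ∧ k' ≤ n + 1 ∧
      ynode σ Y0 h n k + κ * (θ - ynode σ Y0 h n k) * h ≤ ynode σ Y0 h (n + 1) k' then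
    sInf {k' : ℕ | k + 1 ≤ k' ∧ k' ≤ n + 1 ∧
      ynode σ Y0 h n k + κ * (θ - ynode σ Y0 h n k) * h ≤ ynode σ Y0 h (n + 1) k'}
  else n + 1

open Classical in
/-- The 'down' jump index `k_d(n,k)`, with default `0` when the set is empty. -/
def kdF (κ θ σ Y0 h : ℝ) (n k : ℕ) : ℕ :=
  if ∃ k' : ℕ, k' ≤ k ∧
      ynode σ Y0 h (n + 1) k' ≤ ynode σ Y0 h n k + κ * (θ - ynode σ Y0 h n k) * h then
    sSup {k' : ℕ | k' ≤ k ∧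
      ynode σ Y0 h (n + 1) k' ≤ ynode σ Y0 h n k + κ * (θ - ynode σ Y0 h n k) * h}
  else 0

/-- The 'up' transition probability
`p_u(n,k) = 0 ∨ ((μ_Y(y^n_k)h + y^n_k - y^{n+1}_{k_d})/(y^{n+1}_{k_u} - y^{n+1}_{k_d})) ∧ 1`. -/
def puF (κ θ σ Y0 h : ℝ) (n k : ℕ) : ℝ :=
  max 0 (min 1 ((κ * (θ - ynode σ Y0 h n k) * h + ynode σ Y0 h n k
      - ynode σ Y0 h (n + 1) (kdF κ θ σ Y0 h n k)) /
    (ynode σ Y0 h (n + 1) (kuF κ θ σ Y0 h n k)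
      - ynode σ Y0 h (n + 1) (kdF κ θ σ Y0 h n k))))

/-- The 'down' transition probability `p_d(n,k) = 1 - p_u(n,k)`. -/
def pdF (κ θ σ Y0 h : ℝ) (n k : ℕ) : ℝ := 1 - puF κ θ σ Y0 h n k

/-- `(Y_n)_{0 ≤ n ≤ N}` is a Markov chain on the CIR tree with time step `h`:
it starts at `Y₀`, lives on the lattice, and for every bounded measurable `g`, on the
event `{Y_n = y^n_k}` one has
`E[g(Y_{n+1}) | Y_0,…,Y_n] = p_u(n,k) g(y^{n+1}_{k_u}) + p_d(n,k) g(y^{n+1}_{k_d})` a.s. -/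
def IsCIRTreeChain (κ θ σ Y0 h : ℝ) (N : ℕ) {Ω : Type*} [MeasurableSpace Ω]
    (P : Measure Ω) (Y : ℕ → Ω → ℝ) : Prop :=
  (∀ n, Measurable (Y n)) ∧
  (∀ ω, Y 0 ω = Y0) ∧
  (∀ n ≤ N, ∀ ω, ∃ k ≤ n, Y n ω = ynode σ Y0 h n k) ∧
  ∀ n < N, ∀ k ≤ n, ∀ g : ℝ → ℝ, Measurable g → (∃ M, ∀ x, |g x| ≤ M) →
    ∀ᵐ ω ∂P, Y n ω = ynode σ Y0 h n k →
      (P[(fun ω' => g (Y (n + 1) ω')) |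
          MeasurableSpace.comap (fun ω' => fun i : Fin (n + 1) => Y i ω') inferInstance]) ω =
        puF κ θ σ Y0 h n k * g (ynode σ Y0 h (n + 1) (kuF κ θ σ Y0 h n k)) +
        pdF κ θ σ Y0 h n k * g (ynode σ Y0 h (n + 1) (kdF κ θ σ Y0 h n k))

namespace CIRTree

lemma max_zero_le_max_add_zero {a c : ℝ} (hc : 0 ≤ c) :
    max a 0 ≤ max (a + c) 0 ∧ max (a + c) 0 ≤ max a 0 + c :=
  ⟨max_le_max (le_add_of_nonneg_right hc) le_rfl,
    (max_le_max le_rfl (by rwa [zero_add])).trans (max_add_add_right a 0 c).le⟩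

lemma sq_sub_sq_le_of_le_add {u v c : ℝ} (hv : 0 ≤ v) (hvu : v ≤ u) (huv : u ≤ v + c) :
    u ^ 2 - v ^ 2 ≤ 2 * c * u := by
  nlinarith

lemma add_clamp_mul_le {a b x : ℝ} (hab : a ≤ b) :
    a + max 0 (min 1 ((x - a) / (b - a))) * (b - a) ≤ max a x := by
  rcases hab.eq_or_lt with rfl | hlt
  · simp
  have hpos : 0 < b - a := sub_pos.2 hlt
  calc a + max 0 (min 1 ((x - a) / (b - a))) * (b - a)
      ≤ a + max 0 ((x - a) / (b - a)) * (b - a) := by gcongr; exact min_le_right _ _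
    _ = max a x := by
      rw [max_mul_of_nonneg _ _ hpos.le, zero_mul, div_mul_cancel₀ _ hpos.ne',
        ← max_add_add_left, add_zero, add_sub_cancel]

lemma sqrt_le_one_add {x : ℝ} (hx : 0 ≤ x) : √x ≤ 1 + x :=
  (Real.sqrt_le_left (by positivity)).2 (by nlinarith)

lemma self_le_sqrt {x : ℝ} (hx : 0 ≤ x) (hx1 : x ≤ 1) : x ≤ √x :=
  (Real.le_sqrt hx hx).2 (by nlinarith)

lemma max_one_pow_le {y : ℝ} (hy : 0 ≤ y) (m : ℕ) : max 1 y ^ m ≤ 1 + y ^ m := by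
  rcases le_total y 1 with h | h
  · rw [max_eq_left h, one_pow]; linarith [pow_nonneg hy m]
  · rw [max_eq_right h]; linarith

lemma one_add_pow_mul_pow_le {y : ℝ} (hy : 0 ≤ y) {j m : ℕ} (hj : j ≤ m) :
    (1 + y) ^ j * y ^ (m - j) ≤ 2 ^ j * (1 + y ^ m) := by
  calc (1 + y) ^ j * y ^ (m - j) ≤ (2 * max 1 y) ^ j * max 1 y ^ (m - j) := by
        gcongr
        · linarith [le_max_left 1 y, le_max_right 1 y]
        · exact le_max_right _ _
    _ = 2 ^ j * max 1 y ^ m := by rw [mul_pow, mul_assoc, ← pow_add, Nat.add_sub_cancel' hj]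
    _ ≤ 2 ^ j * (1 + y ^ m) := by gcongr; exact max_one_pow_le hy m

lemma pow_le_one_add_pow_succ {y : ℝ} (hy : 0 ≤ y) (m : ℕ) : y ^ m ≤ 1 + y ^ (m + 1) :=
  calc y ^ m ≤ max 1 y ^ m := by gcongr; exact le_max_right _ _
    _ ≤ max 1 y ^ (m + 1) := pow_le_pow_right₀ (le_max_left _ _) (Nat.le_succ m)
    _ ≤ 1 + y ^ (m + 1) := max_one_pow_le hy _

lemma pow_mul_pow_mul_choose_le {y δ D h : ℝ} (hy : 0 ≤ y) (hD : 0 ≤ D) (hh : 0 ≤ h)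
    (hh1 : h ≤ 1) (hδ : |δ| ≤ D * √h * (1 + y)) {j q : ℕ} (hj : 2 ≤ j) (hjq : j ≤ q) :
    δ ^ j * y ^ (q - j) * q.choose j ≤ (2 * D) ^ j * q.choose j * (h * (1 + y ^ q)) := by
  have hsh : √h ^ j ≤ h :=
    calc √h ^ j ≤ √h ^ 2 := pow_le_pow_of_le_one (Real.sqrt_nonneg h) (Real.sqrt_le_one.2 hh1) hj
      _ = h := Real.sq_sqrt hh
  calc δ ^ j * y ^ (q - j) * q.choose j
      ≤ (D * √h * (1 + y)) ^ j * y ^ (q - j) * q.choose j := by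
        gcongr ?_ * _ * _
        exact (le_abs_self _).trans ((abs_pow δ j).le.trans (pow_le_pow_left₀ (abs_nonneg δ) hδ j))
    _ = (D * √h) ^ j * ((1 + y) ^ j * y ^ (q - j)) * q.choose j := by rw [mul_pow]; ring
    _ ≤ (D * √h) ^ j * (2 ^ j * (1 + y ^ q)) * q.choose j := by
        gcongr (D * √h) ^ j * ?_ * _
        exact one_add_pow_mul_pow_le hy hjq
    _ = (2 * D) ^ j * q.choose j * (√h ^ j * (1 + y ^ q)) := by rw [mul_pow, mul_pow]; ring
    _ ≤ (2 * D) ^ j * q.choose j * (h * (1 + y ^ q)) := by gcongr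

lemma sum_range_pow_mul_choose_le {x : ℝ} (hx : 0 ≤ x) (m : ℕ) :
    ∑ i ∈ Finset.range m, x ^ (i + 2) * ((m + 1).choose (i + 2) : ℝ) ≤ (1 + x) ^ (m + 1) := by
  rw [add_comm 1, add_pow, Finset.sum_range_succ', Finset.sum_range_succ']
  simp only [one_pow, mul_one]
  have : 0 ≤ x ^ (0 + 1) * ((m + 1).choose (0 + 1) : ℝ) + x ^ 0 * ((m + 1).choose 0 : ℝ) := by
    positivity
  linarith

lemma pow_succ_add_le {y δ D h : ℝ} (m : ℕ) (hy : 0 ≤ y) (hD : 0 ≤ D) (hh : 0 ≤ h)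
    (hh1 : h ≤ 1) (hδ : |δ| ≤ D * √h * (1 + y)) :
    (y + δ) ^ (m + 1) ≤
      y ^ (m + 1) + (m + 1) * y ^ m * δ + (1 + 2 * D) ^ (m + 1) * h * (1 + y ^ (m + 1)) := by
  have htail : ∑ i ∈ Finset.range m, δ ^ (i + 2) * y ^ (m + 1 - (i + 2)) * (m + 1).choose (i + 2)
      ≤ (1 + 2 * D) ^ (m + 1) * (h * (1 + y ^ (m + 1))) :=
    calc _ ≤ ∑ i ∈ Finset.range m,
            (2 * D) ^ (i + 2) * (m + 1).choose (i + 2) * (h * (1 + y ^ (m + 1))) :=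
          Finset.sum_le_sum fun i hi => pow_mul_pow_mul_choose_le hy hD hh hh1 hδ (by omega)
            (by rw [Finset.mem_range] at hi; omega)
      _ ≤ _ := by
          rw [← Finset.sum_mul]
          gcongr
          exact sum_range_pow_mul_choose_le (by positivity) m
  rw [add_comm y δ, add_pow, Finset.sum_range_succ', Finset.sum_range_succ']
  simp only [zero_add, pow_zero, pow_one, one_mul, Nat.sub_zero, Nat.choose_zero_right,
    Nat.choose_one_right, Nat.add_sub_cancel, Nat.cast_add_one, Nat.cast_zero, add_assoc,
    Nat.reduceAdd] at htail ⊢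
  linarith

lemma one_add_rpow_le {x p : ℝ} {m : ℕ} (hx : 0 ≤ x) (hp : 0 ≤ p) (hpm : p ≤ m) :
    (1 + x) ^ p ≤ 2 ^ p * (1 + x ^ m) :=
  calc (1 + x) ^ p ≤ (2 * max 1 x) ^ p :=
        Real.rpow_le_rpow (by positivity) (by linarith [le_max_left 1 x, le_max_right 1 x]) hp
    _ = 2 ^ p * max 1 x ^ p := Real.mul_rpow (by norm_num) (by positivity)
    _ ≤ 2 ^ p * max 1 x ^ (m : ℝ) :=
        mul_le_mul_of_nonneg_left (Real.rpow_le_rpow_of_exponent_le (le_max_left _ _) hpm)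
          (by positivity)
    _ ≤ 2 ^ p * (1 + x ^ m) := by
        rw [Real.rpow_natCast]; gcongr; exact max_one_pow_le hx m

lemma rpow_le_of_le_mul_one_add {z x c p : ℝ} {m : ℕ} (hz : 0 ≤ z) (hx : 0 ≤ x) (hc : 0 ≤ c)
    (hp : 0 ≤ p) (hpm : p ≤ m) (hzx : z ≤ c * (1 + x)) : z ^ p ≤ (2 * c) ^ p * (1 + x ^ m) :=
  calc z ^ p ≤ (c * (1 + x)) ^ p := Real.rpow_le_rpow hz hzx hp
    _ = c ^ p * (1 + x) ^ p := Real.mul_rpow hc (by positivity)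
    _ ≤ c ^ p * (2 ^ p * (1 + x ^ m)) := by gcongr; exact one_add_rpow_le hx hp hpm
    _ = (2 * c) ^ p * (1 + x ^ m) := by rw [Real.mul_rpow zero_le_two hc]; ring

lemma le_one_add_pow_mul {u : ℕ → ℝ} {a : ℝ} {N : ℕ} (ha : 0 ≤ a)
    (hu : ∀ n < N, u (n + 1) ≤ (1 + a) * u n) : ∀ n ≤ N, u n ≤ (1 + a) ^ n * u 0 := by
  intro n hn
  induction n with
  | zero => simp
  | succ n ih =>
    calc u (n + 1) ≤ (1 + a) * u n := hu n hn
      _ ≤ (1 + a) * ((1 + a) ^ n * u 0) := by gcongr; exact ih (by omega)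
      _ = (1 + a) ^ (n + 1) * u 0 := by ring

def nodeRoot (σ Y0 h : ℝ) (n k : ℕ) : ℝ := √Y0 + σ / 2 * (2 * (k : ℝ) - n) * √h

section Lattice

variable {σ Y0 h : ℝ} {n k : ℕ}

lemma sqrt_ynode : √(ynode σ Y0 h n k) = max (nodeRoot σ Y0 h n k) 0 := by
  unfold ynode nodeRoot
  split_ifs with hpos
  · rw [max_eq_left hpos.le, Real.sqrt_sq hpos.le]
  · rw [max_eq_right (not_lt.1 hpos), Real.sqrt_zero]

lemma ynode_nonneg : 0 ≤ ynode σ Y0 h n k := by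
  unfold ynode; split_ifs <;> positivity

lemma sq_sqrt_ynode : √(ynode σ Y0 h n k) ^ 2 = ynode σ Y0 h n k :=
  Real.sq_sqrt ynode_nonneg

lemma nodeRoot_succ_right : nodeRoot σ Y0 h n (k + 1) = nodeRoot σ Y0 h n k + σ * √h := by
  unfold nodeRoot; push_cast; ring

lemma nodeRoot_succ_left : nodeRoot σ Y0 h n k = nodeRoot σ Y0 h (n + 1) k + σ / 2 * √h := by
  unfold nodeRoot; push_cast; ring

lemma nodeRoot_succ_succ :
    nodeRoot σ Y0 h (n + 1) (k + 1) = nodeRoot σ Y0 h n k + σ / 2 * √h := by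
  unfold nodeRoot; push_cast; ring

lemma sqrt_ynode_le_of_nodeRoot_eq {n' k' : ℕ} {c : ℝ} (hc : 0 ≤ c)
    (h' : nodeRoot σ Y0 h n' k' = nodeRoot σ Y0 h n k + c) :
    √(ynode σ Y0 h n k) ≤ √(ynode σ Y0 h n' k') ∧
      √(ynode σ Y0 h n' k') ≤ √(ynode σ Y0 h n k) + c := by
  rw [sqrt_ynode, sqrt_ynode, h']
  exact max_zero_le_max_add_zero hc

lemma ynode_le_of_sqrt_le {n' k' : ℕ} (hle : √(ynode σ Y0 h n k) ≤ √(ynode σ Y0 h n' k')) :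
    ynode σ Y0 h n k ≤ ynode σ Y0 h n' k' :=
  (Real.sqrt_le_sqrt_iff ynode_nonneg).1 hle

lemma sqrt_ynode_succ_right (hσ : 0 ≤ σ) :
    √(ynode σ Y0 h n k) ≤ √(ynode σ Y0 h n (k + 1)) ∧
      √(ynode σ Y0 h n (k + 1)) ≤ √(ynode σ Y0 h n k) + σ * √h :=
  sqrt_ynode_le_of_nodeRoot_eq (by positivity) nodeRoot_succ_right

lemma sqrt_ynode_succ_left (hσ : 0 ≤ σ) :
    √(ynode σ Y0 h (n + 1) k) ≤ √(ynode σ Y0 h n k) ∧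
      √(ynode σ Y0 h n k) ≤ √(ynode σ Y0 h (n + 1) k) + σ / 2 * √h :=
  sqrt_ynode_le_of_nodeRoot_eq (by positivity) nodeRoot_succ_left

lemma sqrt_ynode_succ_succ (hσ : 0 ≤ σ) :
    √(ynode σ Y0 h n k) ≤ √(ynode σ Y0 h (n + 1) (k + 1)) ∧
      √(ynode σ Y0 h (n + 1) (k + 1)) ≤ √(ynode σ Y0 h n k) + σ / 2 * √h :=
  sqrt_ynode_le_of_nodeRoot_eq (by positivity) nodeRoot_succ_succ

lemma ynode_mono (hσ : 0 ≤ σ) : Monotone (ynode σ Y0 h n) :=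
  monotone_nat_of_le_succ fun _ => ynode_le_of_sqrt_le (sqrt_ynode_succ_right hσ).1

lemma ynode_succ_left_le (hσ : 0 ≤ σ) : ynode σ Y0 h (n + 1) k ≤ ynode σ Y0 h n k :=
  ynode_le_of_sqrt_le (sqrt_ynode_succ_left hσ).1

lemma ynode_le_ynode_succ_succ (hσ : 0 ≤ σ) :
    ynode σ Y0 h n k ≤ ynode σ Y0 h (n + 1) (k + 1) :=
  ynode_le_of_sqrt_le (sqrt_ynode_succ_succ hσ).1

lemma ynode_sub_ynode_succ_left_le (hσ : 0 ≤ σ) :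
    ynode σ Y0 h n k - ynode σ Y0 h (n + 1) k ≤ σ * √h * √(ynode σ Y0 h n k) := by
  have := sq_sub_sq_le_of_le_add (Real.sqrt_nonneg (ynode σ Y0 h (n + 1) k))
    (sqrt_ynode_succ_left hσ).1 (sqrt_ynode_succ_left hσ).2
  rw [sq_sqrt_ynode, sq_sqrt_ynode] at this
  linarith

lemma ynode_succ_right_sub_le (hσ : 0 ≤ σ) :
    ynode σ Y0 h n (k + 1) - ynode σ Y0 h n k ≤ 2 * (σ * √h) * √(ynode σ Y0 h n (k + 1)) := by
  have := sq_sub_sq_le_of_le_add (Real.sqrt_nonneg (ynode σ Y0 h n k))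
    (sqrt_ynode_succ_right hσ).1 (sqrt_ynode_succ_right hσ).2
  rwa [sq_sqrt_ynode, sq_sqrt_ynode] at this

end Lattice

def jumpConst (κ θ σ : ℝ) : ℝ := κ + κ * θ + σ ^ 2 + 2 * σ * (1 + κ * θ)

def momentConst (κ θ σ : ℝ) (m : ℕ) : ℝ :=
  (m + 1) * (κ * θ) + (1 + 2 * jumpConst κ θ σ) ^ (m + 1)

section Transition

variable {κ θ σ Y0 h : ℝ} {n k : ℕ}

lemma kuF_spec (hk : k ≤ n) :
    k + 1 ≤ kuF κ θ σ Y0 h n k ∧ kuF κ θ σ Y0 h n k ≤ n + 1 ∧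
      (kuF κ θ σ Y0 h n k = k + 1 ∨ ∃ j, kuF κ θ σ Y0 h n k = j + 1 ∧
        ynode σ Y0 h (n + 1) j < ynode σ Y0 h n k + κ * (θ - ynode σ Y0 h n k) * h) := by
  unfold kuF
  split_ifs with hne
  · set S := {k' : ℕ | k + 1 ≤ k' ∧ k' ≤ n + 1 ∧
      ynode σ Y0 h n k + κ * (θ - ynode σ Y0 h n k) * h ≤ ynode σ Y0 h (n + 1) k'}
    obtain ⟨hlo, hhi, -⟩ : sInf S ∈ S := Nat.sInf_mem hne
    refine ⟨hlo, hhi, hlo.eq_or_lt.imp Eq.symm fun hlt => ⟨sInf S - 1, by omega, ?_⟩⟩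
    have hnot : sInf S - 1 ∉ S := Nat.notMem_of_lt_sInf (by omega)
    exact lt_of_not_ge fun hle => hnot ⟨by omega, by omega, hle⟩
  · push Not at hne
    refine ⟨by omega, le_rfl, ?_⟩
    rcases hk.eq_or_lt with rfl | hlt
    · exact Or.inl rfl
    · exact Or.inr ⟨n, rfl, hne n (by omega) (by omega)⟩

lemma kdF_spec :
    kdF κ θ σ Y0 h n k ≤ k ∧
      (kdF κ θ σ Y0 h n k = k ∨
        (kdF κ θ σ Y0 h n k < k ∧ ynode σ Y0 h n k + κ * (θ - ynode σ Y0 h n k) * h <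
          ynode σ Y0 h (n + 1) (kdF κ θ σ Y0 h n k + 1)) ∨
        ynode σ Y0 h n k + κ * (θ - ynode σ Y0 h n k) * h <
          ynode σ Y0 h (n + 1) (kdF κ θ σ Y0 h n k)) := by
  unfold kdF
  split_ifs with hne
  · have hbdd : BddAbove {k' | k' ≤ k ∧ ynode σ Y0 h (n + 1) k' ≤
        ynode σ Y0 h n k + κ * (θ - ynode σ Y0 h n k) * h} := ⟨k, fun _ hj => hj.1⟩
    have hle := (Nat.sSup_mem hne hbdd).1
    refine ⟨hle, hle.eq_or_lt.imp id fun hlt => Or.inl ⟨hlt, ?_⟩⟩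
    by_contra hcon
    have := le_csSup hbdd ⟨hlt, not_lt.1 hcon⟩
    omega
  · push Not at hne
    exact ⟨Nat.zero_le k, Or.inr (Or.inr (hne 0 (Nat.zero_le k)))⟩

lemma kuF_le (hk : k ≤ n) : kuF κ θ σ Y0 h n k ≤ n + 1 := (kuF_spec hk).2.1

lemma kdF_le : kdF κ θ σ Y0 h n k ≤ k := kdF_spec.1

lemma ynode_kdF_le (hσ : 0 ≤ σ) :
    ynode σ Y0 h (n + 1) (kdF κ θ σ Y0 h n k) ≤ ynode σ Y0 h n k :=
  (ynode_mono hσ kdF_le).trans (ynode_succ_left_le hσ)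

lemma le_ynode_kuF (hσ : 0 ≤ σ) (hk : k ≤ n) :
    ynode σ Y0 h n k ≤ ynode σ Y0 h (n + 1) (kuF κ θ σ Y0 h n k) :=
  (ynode_le_ynode_succ_succ hσ).trans (ynode_mono hσ (kuF_spec hk).1)

lemma puF_nonneg : 0 ≤ puF κ θ σ Y0 h n k := le_max_left _ _

lemma puF_le_one : puF κ θ σ Y0 h n k ≤ 1 := max_le zero_le_one (min_le_left _ _)

lemma pdF_nonneg : 0 ≤ pdF κ θ σ Y0 h n k := sub_nonneg.2 puF_le_one

lemma puF_add_pdF : puF κ θ σ Y0 h n k + pdF κ θ σ Y0 h n k = 1 := add_sub_cancel _ _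

lemma puF_mul_add_pdF_mul_le (hκ : 0 ≤ κ) (hθ : 0 ≤ θ) (hσ : 0 ≤ σ) (hh : 0 ≤ h) (hk : k ≤ n) :
    puF κ θ σ Y0 h n k * ynode σ Y0 h (n + 1) (kuF κ θ σ Y0 h n k) +
        pdF κ θ σ Y0 h n k * ynode σ Y0 h (n + 1) (kdF κ θ σ Y0 h n k) ≤
      ynode σ Y0 h n k + κ * θ * h := by
  set y := ynode σ Y0 h n k
  set yu := ynode σ Y0 h (n + 1) (kuF κ θ σ Y0 h n k)
  set yd := ynode σ Y0 h (n + 1) (kdF κ θ σ Y0 h n k)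
  have hd : yd ≤ y := ynode_kdF_le hσ
  have hu : y ≤ yu := le_ynode_kuF hσ hk
  have hclamp := add_clamp_mul_le (x := κ * (θ - y) * h + y) (hd.trans hu)
  have hy : 0 ≤ κ * y * h := by have : 0 ≤ y := ynode_nonneg; positivity
  have hθh : 0 ≤ κ * θ * h := by positivity
  calc puF κ θ σ Y0 h n k * yu + pdF κ θ σ Y0 h n k * yd
      = yd + max 0 (min 1 ((κ * (θ - y) * h + y - yd) / (yu - yd))) * (yu - yd) := by
        rw [pdF, puF]; ring
    _ ≤ max yd (κ * (θ - y) * h + y) := hclamp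
    _ ≤ y + κ * θ * h := max_le (by linarith) (by linarith)

lemma ynode_kuF_le (hκ : 0 ≤ κ) (hθ : 0 ≤ θ) (hσ : 0 ≤ σ) (hh : 0 ≤ h) (hk : k ≤ n) :
    ynode σ Y0 h (n + 1) (kuF κ θ σ Y0 h n k) ≤
      (√(ynode σ Y0 h n k + κ * θ * h) + σ * √h) ^ 2 := by
  set y := ynode σ Y0 h n k
  have hmean : y + κ * (θ - y) * h ≤ y + κ * θ * h := by
    have : 0 ≤ κ * y * h := by have : 0 ≤ y := ynode_nonneg; positivity
    linarith
  suffices √(ynode σ Y0 h (n + 1) (kuF κ θ σ Y0 h n k)) ≤ √(y + κ * θ * h) + σ * √h by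
    rw [← sq_sqrt_ynode]; gcongr
  rcases (kuF_spec hk).2.2 with hu | ⟨j, hj, hlt⟩
  · rw [hu]
    have hy : √y ≤ √(y + κ * θ * h) := Real.sqrt_le_sqrt (le_add_of_nonneg_right (by positivity))
    have : σ / 2 * √h ≤ σ * √h := by have := Real.sqrt_nonneg h; nlinarith
    linarith [(sqrt_ynode_succ_succ (Y0 := Y0) (h := h) (n := n) (k := k) hσ).2]
  · rw [hj]
    have hj' : √(ynode σ Y0 h (n + 1) j) ≤ √(y + κ * θ * h) := Real.sqrt_le_sqrt (by linarith)
    linarith [(sqrt_ynode_succ_right (Y0 := Y0) (h := h) (n := n + 1) (k := j) hσ).2]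

lemma abs_ynode_kuF_sub_le (hκ : 0 ≤ κ) (hθ : 0 ≤ θ) (hσ : 0 ≤ σ) (hh : 0 ≤ h) (hh1 : h ≤ 1)
    (hk : k ≤ n) :
    |ynode σ Y0 h (n + 1) (kuF κ θ σ Y0 h n k) - ynode σ Y0 h n k| ≤
      jumpConst κ θ σ * √h * (1 + ynode σ Y0 h n k) := by
  set y := ynode σ Y0 h n k
  have hy : 0 ≤ y := ynode_nonneg
  set a := √(y + κ * θ * h)
  have ha : a ^ 2 = y + κ * θ * h := Real.sq_sqrt (by positivity)
  have ha1 : a ≤ 1 + y + κ * θ := by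
    have : κ * θ * h ≤ κ * θ := mul_le_of_le_one_right (by positivity) hh1
    linarith [sqrt_le_one_add (x := y + κ * θ * h) (by positivity)]
  have hsh : h ≤ √h := self_le_sqrt hh hh1
  rw [abs_of_nonneg (sub_nonneg.2 (le_ynode_kuF hσ hk))]
  calc ynode σ Y0 h (n + 1) (kuF κ θ σ Y0 h n k) - y ≤ (a + σ * √h) ^ 2 - y := by
        linarith [ynode_kuF_le (Y0 := Y0) (n := n) hκ hθ hσ hh hk]
    _ = κ * θ * h + 2 * σ * √h * a + σ ^ 2 * h := by
        rw [add_sq, ha, mul_pow, Real.sq_sqrt hh]; ring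
    _ ≤ κ * θ * √h + 2 * σ * √h * (1 + y + κ * θ) + σ ^ 2 * √h := by
        gcongr
    _ ≤ jumpConst κ θ σ * √h * (1 + y) := by
        have : 0 ≤ √h * (κ + (κ + κ * θ + σ ^ 2 + 2 * σ * κ * θ) * y) := by positivity
        unfold jumpConst
        linear_combination this

lemma ynode_sub_ynode_kdF_le (hκ : 0 ≤ κ) (hθ : 0 ≤ θ) (hσ : 0 ≤ σ) (hh : 0 ≤ h) :
    ynode σ Y0 h n k - ynode σ Y0 h (n + 1) (kdF κ θ σ Y0 h n k) ≤
      κ * ynode σ Y0 h n k * h + 2 * (σ * √h) * √(ynode σ Y0 h n k) := by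
  set y := ynode σ Y0 h n k
  have hy : 0 ≤ y := ynode_nonneg
  have hmean : y - κ * y * h ≤ y + κ * (θ - y) * h := by
    have : 0 ≤ κ * θ * h := by positivity
    linarith
  have hκy : 0 ≤ κ * y * h := by positivity
  have hσy : 0 ≤ σ * √h * √y := by positivity
  rcases kdF_spec.2 with hd | ⟨hlt, hgt⟩ | hgt
  · rw [hd]
    linarith [ynode_sub_ynode_succ_left_le (Y0 := Y0) (h := h) (n := n) (k := k) hσ]
  · set j := kdF κ θ σ Y0 h n k
    have hstep := ynode_succ_right_sub_le (Y0 := Y0) (h := h) (n := n + 1) (k := j) hσ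
    have hle : √(ynode σ Y0 h (n + 1) (j + 1)) ≤ √y :=
      Real.sqrt_le_sqrt ((ynode_mono hσ hlt).trans (ynode_succ_left_le hσ))
    have : 2 * (σ * √h) * √(ynode σ Y0 h (n + 1) (j + 1)) ≤ 2 * (σ * √h) * √y := by gcongr
    linarith
  · linarith

lemma abs_ynode_kdF_sub_le (hκ : 0 ≤ κ) (hθ : 0 ≤ θ) (hσ : 0 ≤ σ) (hh : 0 ≤ h) (hh1 : h ≤ 1) :
    |ynode σ Y0 h (n + 1) (kdF κ θ σ Y0 h n k) - ynode σ Y0 h n k| ≤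
      jumpConst κ θ σ * √h * (1 + ynode σ Y0 h n k) := by
  set y := ynode σ Y0 h n k
  have hy : 0 ≤ y := ynode_nonneg
  have hsh : h ≤ √h := self_le_sqrt hh hh1
  rw [abs_sub_comm, abs_of_nonneg (sub_nonneg.2 (ynode_kdF_le hσ))]
  calc y - ynode σ Y0 h (n + 1) (kdF κ θ σ Y0 h n k) ≤ κ * y * h + 2 * (σ * √h) * √y :=
        ynode_sub_ynode_kdF_le hκ hθ hσ hh
    _ ≤ κ * y * √h + 2 * (σ * √h) * (1 + y) := by
        gcongr
        exact sqrt_le_one_add hy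
    _ ≤ jumpConst κ θ σ * √h * (1 + y) := by
        have : 0 ≤ √h * (κ + (κ * θ + σ ^ 2 + 2 * σ * κ * θ) * (1 + y)) := by positivity
        unfold jumpConst
        linear_combination this

lemma puF_mul_pow_add_pdF_mul_pow_le (hκ : 0 ≤ κ) (hθ : 0 ≤ θ) (hσ : 0 ≤ σ) (hh : 0 ≤ h)
    (hh1 : h ≤ 1) (hk : k ≤ n) (m : ℕ) :
    puF κ θ σ Y0 h n k * ynode σ Y0 h (n + 1) (kuF κ θ σ Y0 h n k) ^ (m + 1) +
        pdF κ θ σ Y0 h n k * ynode σ Y0 h (n + 1) (kdF κ θ σ Y0 h n k) ^ (m + 1) ≤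
      ynode σ Y0 h n k ^ (m + 1) + momentConst κ θ σ m * h * (1 + ynode σ Y0 h n k ^ (m + 1)) := by
  set y := ynode σ Y0 h n k
  set yu := ynode σ Y0 h (n + 1) (kuF κ θ σ Y0 h n k)
  set yd := ynode σ Y0 h (n + 1) (kdF κ θ σ Y0 h n k)
  set pu := puF κ θ σ Y0 h n k
  set pd := pdF κ θ σ Y0 h n k
  set R := (1 + 2 * jumpConst κ θ σ) ^ (m + 1) * h * (1 + y ^ (m + 1))
  have hy : 0 ≤ y := ynode_nonneg
  have hD : 0 ≤ jumpConst κ θ σ := by unfold jumpConst; positivity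
  have hu := pow_succ_add_le m hy hD hh hh1 (abs_ynode_kuF_sub_le hκ hθ hσ hh hh1 hk)
  have hd := pow_succ_add_le m hy hD hh hh1 (abs_ynode_kdF_sub_le hκ hθ hσ hh hh1)
  rw [add_sub_cancel] at hu hd
  have hdrift : pu * (yu - y) + pd * (yd - y) ≤ κ * θ * h := by
    have := puF_mul_add_pdF_mul_le hκ hθ hσ hh hk (Y0 := Y0)
    have hsum : pu + pd = 1 := puF_add_pdF
    linear_combination this - y * hsum
  have hlin : (m + 1) * y ^ m * (pu * (yu - y) + pd * (yd - y)) ≤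
      (m + 1) * (κ * θ) * h * (1 + y ^ (m + 1)) :=
    calc (m + 1) * y ^ m * (pu * (yu - y) + pd * (yd - y)) ≤ (m + 1) * y ^ m * (κ * θ * h) := by
          gcongr
      _ ≤ (m + 1) * (1 + y ^ (m + 1)) * (κ * θ * h) := by
          gcongr; exact pow_le_one_add_pow_succ hy m
      _ = (m + 1) * (κ * θ) * h * (1 + y ^ (m + 1)) := by ring
  calc pu * yu ^ (m + 1) + pd * yd ^ (m + 1)
      ≤ pu * (y ^ (m + 1) + (m + 1) * y ^ m * (yu - y) + R) +
          pd * (y ^ (m + 1) + (m + 1) * y ^ m * (yd - y) + R) := by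
        gcongr
        · exact puF_nonneg
        · exact pdF_nonneg
    _ = y ^ (m + 1) + (m + 1) * y ^ m * (pu * (yu - y) + pd * (yd - y)) + R := by
        simp only [pd, pdF]; ring
    _ ≤ y ^ (m + 1) + momentConst κ θ σ m * h * (1 + y ^ (m + 1)) := by
        unfold momentConst; linarith

end Transition

lemma ae_eq_zero_of_condExp_eq_zero {Ω : Type*} {m m0 : MeasurableSpace Ω} {μ : Measure Ω}
    (hm : m ≤ m0) [SigmaFinite (μ.trim hm)] {f : Ω → ℝ} (hf0 : ∀ ω, 0 ≤ f ω)
    (hf : Integrable f μ) {A : Set Ω} (hA : MeasurableSet[m] A)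
    (hzero : ∀ᵐ ω ∂μ, ω ∈ A → μ[f|m] ω = 0) : ∀ᵐ ω ∂μ, ω ∈ A → f ω = 0 := by
  have hA0 : MeasurableSet A := hm A hA
  have hint : ∫ ω in A, f ω ∂μ = 0 := by
    rw [← setIntegral_condExp hm hf hA]
    exact integral_eq_zero_of_ae ((ae_restrict_iff' hA0).2 hzero)
  exact (ae_restrict_iff' hA0).1
    ((setIntegral_eq_zero_iff_of_nonneg_ae (ae_of_all _ hf0) hf.integrableOn).1 hint)

lemma integral_rpow_rpow_inv_le {Ω : Type*} [MeasurableSpace Ω] {μ : Measure Ω}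
    {Z W : Ω → ℝ} {p c A : ℝ} (hp : 1 ≤ p) (hc : 0 ≤ c) (hA : 1 ≤ A) (hZ : ∀ ω, 0 ≤ Z ω)
    (hW : Integrable W μ) (hZW : ∀ᵐ ω ∂μ, Z ω ^ p ≤ c ^ p * W ω) (hWA : ∫ ω, W ω ∂μ ≤ A) :
    (∫ ω, Z ω ^ p ∂μ) ^ (1 / p) ≤ c * A := by
  have hp0 : 0 < p := by linarith
  have hint : ∫ ω, Z ω ^ p ∂μ ≤ c ^ p * A := by
    calc ∫ ω, Z ω ^ p ∂μ ≤ ∫ ω, c ^ p * W ω ∂μ :=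
          integral_mono_of_nonneg (ae_of_all _ fun ω => by have := hZ ω; positivity)
            (hW.const_mul _) hZW
      _ ≤ c ^ p * A := by rw [integral_const_mul]; gcongr
  calc (∫ ω, Z ω ^ p ∂μ) ^ (1 / p) ≤ (c ^ p * A) ^ (1 / p) :=
        Real.rpow_le_rpow (integral_nonneg fun ω => by have := hZ ω; positivity) hint
          (by positivity)
    _ = c * A ^ (1 / p) := by
        rw [Real.mul_rpow (by positivity) (by linarith), ← Real.rpow_mul hc,
          mul_one_div_cancel hp0.ne', Real.rpow_one]
    _ ≤ c * A := by
        gcongr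
        calc A ^ (1 / p) ≤ A ^ (1 : ℝ) :=
              Real.rpow_le_rpow_of_exponent_le hA ((div_le_one hp0).2 hp)
          _ = A := Real.rpow_one A

lemma comap_past_le {Ω : Type*} [MeasurableSpace Ω] {Y : ℕ → Ω → ℝ}
    (hY : ∀ n, Measurable (Y n)) (n : ℕ) :
    MeasurableSpace.comap (fun ω (i : Fin (n + 1)) => Y i ω) inferInstance ≤ ‹MeasurableSpace Ω› :=
  (measurable_pi_lambda (fun ω (i : Fin (n + 1)) => Y i ω) fun i => hY i).comap_le

lemma measurableSet_comap_past {Ω : Type*} {Y : ℕ → Ω → ℝ} (n : ℕ) (c : ℝ) :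
    MeasurableSet[MeasurableSpace.comap (fun ω (i : Fin (n + 1)) => Y i ω) inferInstance]
      {ω | Y n ω = c} :=
  ⟨(fun v : Fin (n + 1) → ℝ => v (Fin.last n)) ⁻¹' {c},
    (measurable_pi_apply _) (measurableSet_singleton c), rfl⟩

end CIRTree

namespace IsCIRTreeChain

open CIRTree

variable {Ω : Type*} [MeasurableSpace Ω] {P : Measure Ω} {Y : ℕ → Ω → ℝ}
  {κ θ σ Y0 h T : ℝ} {N n : ℕ}

lemma mem_Icc (hc : IsCIRTreeChain κ θ σ Y0 h N P Y) (hσ : 0 ≤ σ) (hn : n ≤ N) (ω : Ω) :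
    Y n ω ∈ Set.Icc 0 (ynode σ Y0 h n n) := by
  obtain ⟨k, hk, hY⟩ := hc.2.2.1 n hn ω
  rw [hY]
  exact ⟨ynode_nonneg, ynode_mono hσ hk⟩

lemma integrable_pow [IsFiniteMeasure P] (hc : IsCIRTreeChain κ θ σ Y0 h N P Y) (hσ : 0 ≤ σ)
    (hn : n ≤ N) (q : ℕ) : Integrable (fun ω => Y n ω ^ q) P := by
  refine Integrable.of_bound ((hc.1 n).pow_const q).aestronglyMeasurable (ynode σ Y0 h n n ^ q)
    (ae_of_all _ fun ω => ?_)
  obtain ⟨h0, h1⟩ := hc.mem_Icc hσ hn ω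
  rw [Real.norm_eq_abs, abs_of_nonneg (by positivity)]
  exact pow_le_pow_left₀ h0 h1 q

lemma ae_condExp_eq (hc : IsCIRTreeChain κ θ σ Y0 h N P Y) (hn : n < N) {g : ℝ → ℝ}
    (hg : Measurable g) (hgb : ∃ M, ∀ x, |g x| ≤ M) :
    ∀ᵐ ω ∂P, ∀ k ≤ n, Y n ω = ynode σ Y0 h n k →
      P[fun ω' => g (Y (n + 1) ω') |
          MeasurableSpace.comap (fun ω (i : Fin (n + 1)) => Y i ω) inferInstance] ω =
        puF κ θ σ Y0 h n k * g (ynode σ Y0 h (n + 1) (kuF κ θ σ Y0 h n k)) +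
        pdF κ θ σ Y0 h n k * g (ynode σ Y0 h (n + 1) (kdF κ θ σ Y0 h n k)) :=
  ae_all_iff.2 fun k => Filter.eventually_imp_distrib_left.2 fun hk => hc.2.2.2 n hn k hk g hg hgb

lemma ae_succ_eq_or [IsFiniteMeasure P] (hc : IsCIRTreeChain κ θ σ Y0 h N P Y) (hn : n < N) :
    ∀ᵐ ω ∂P, ∀ k ≤ n, Y n ω = ynode σ Y0 h n k →
      Y (n + 1) ω = ynode σ Y0 h (n + 1) (kuF κ θ σ Y0 h n k) ∨
        Y (n + 1) ω = ynode σ Y0 h (n + 1) (kdF κ θ σ Y0 h n k) := by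
  refine ae_all_iff.2 fun k => Filter.eventually_imp_distrib_left.2 fun hk => ?_
  set S : Set ℝ := {ynode σ Y0 h (n + 1) (kuF κ θ σ Y0 h n k),
    ynode σ Y0 h (n + 1) (kdF κ θ σ Y0 h n k)}
  have hS : MeasurableSet Sᶜ := ((measurableSet_singleton _).insert _).compl
  set g : ℝ → ℝ := Sᶜ.indicator fun _ => 1
  have hg : Measurable g := measurable_const.indicator hS
  have hgb : ∀ x, |g x| ≤ 1 := fun x => by
    by_cases hx : x ∈ Sᶜ <;> simp [g, hx]
  have hzero := ae_eq_zero_of_condExp_eq_zero (comap_past_le hc.1 n)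
    (fun ω => Set.indicator_nonneg (fun _ _ => zero_le_one) (Y (n + 1) ω))
    (Integrable.of_bound (hg.comp (hc.1 (n + 1))).aestronglyMeasurable 1
      (ae_of_all _ fun ω => hgb _))
    (measurableSet_comap_past n (ynode σ Y0 h n k))
    ((hc.2.2.2 n hn k hk _ hg ⟨1, hgb⟩).mono fun ω hω hmem => by
      rw [hω hmem]; simp [g, S])
  filter_upwards [hzero] with ω hω hY
  simpa [g, S, or_iff_not_imp_left] using hω hY

lemma ae_abs_succ_sub_le [IsFiniteMeasure P] (hc : IsCIRTreeChain κ θ σ Y0 h N P Y)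
    (hκ : 0 ≤ κ) (hθ : 0 ≤ θ) (hσ : 0 ≤ σ) (hh : 0 ≤ h) (hh1 : h ≤ 1) (hn : n < N) :
    ∀ᵐ ω ∂P, |Y (n + 1) ω - Y n ω| ≤ jumpConst κ θ σ * √h * (1 + Y n ω) := by
  filter_upwards [hc.ae_succ_eq_or hn] with ω hω
  obtain ⟨k, hk, hY⟩ := hc.2.2.1 n hn.le ω
  rcases hω k hk hY with hnext | hnext <;> rw [hnext, hY]
  · exact abs_ynode_kuF_sub_le hκ hθ hσ hh hh1 hk
  · exact abs_ynode_kdF_sub_le hκ hθ hσ hh hh1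

lemma integral_le_of_node_le [IsFiniteMeasure P] (hc : IsCIRTreeChain κ θ σ Y0 h N P Y)
    (hn : n < N) {g Φ : ℝ → ℝ} (hg : Measurable g) (hgb : ∃ M, ∀ x, |g x| ≤ M)
    (hΦ : Integrable (fun ω => Φ (Y n ω)) P)
    (hnode : ∀ k ≤ n, puF κ θ σ Y0 h n k * g (ynode σ Y0 h (n + 1) (kuF κ θ σ Y0 h n k)) +
        pdF κ θ σ Y0 h n k * g (ynode σ Y0 h (n + 1) (kdF κ θ σ Y0 h n k)) ≤
      Φ (ynode σ Y0 h n k)) :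
    ∫ ω, g (Y (n + 1) ω) ∂P ≤ ∫ ω, Φ (Y n ω) ∂P := by
  rw [← integral_condExp (comap_past_le hc.1 n)]
  refine integral_mono_ae integrable_condExp hΦ ?_
  filter_upwards [hc.ae_condExp_eq hn hg hgb] with ω hω
  obtain ⟨k, hk, hY⟩ := hc.2.2.1 n hn.le ω
  rw [hω k hk hY, hY]
  exact hnode k hk

lemma integral_one_add_pow_succ_le [IsProbabilityMeasure P]
    (hc : IsCIRTreeChain κ θ σ Y0 h N P Y) (hκ : 0 ≤ κ) (hθ : 0 ≤ θ) (hσ : 0 ≤ σ) (hh : 0 ≤ h)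
    (hh1 : h ≤ 1) (hn : n < N) (m : ℕ) :
    ∫ ω, (1 + Y (n + 1) ω ^ (m + 1)) ∂P ≤
      (1 + momentConst κ θ σ m * h) * ∫ ω, (1 + Y n ω ^ (m + 1)) ∂P := by
  -- The chain property only covers bounded `g`, so `x ^ (m + 1)` is truncated outside `[0, R]`,
  -- which contains every node of level `n + 1`.
  set R := ynode σ Y0 h (n + 1) (n + 1)
  set g : ℝ → ℝ := fun x => max 0 (min x R) ^ (m + 1)
  have hR : 0 ≤ R := ynode_nonneg
  have hg_eq : ∀ x, 0 ≤ x → x ≤ R → g x = x ^ (m + 1) := fun x h0 h1 => by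
    simp only [g, min_eq_left h1, max_eq_right h0]
  have hgb : ∀ x, |g x| ≤ R ^ (m + 1) := fun x => by
    rw [abs_of_nonneg (by positivity)]
    exact pow_le_pow_left₀ (le_max_left _ _) (max_le hR (min_le_right _ _)) _
  have hnode_eq : ∀ j ≤ n + 1, g (ynode σ Y0 h (n + 1) j) = ynode σ Y0 h (n + 1) j ^ (m + 1) :=
    fun j hj => hg_eq _ ynode_nonneg (ynode_mono hσ hj)
  have hint : Integrable (fun ω => 1 + Y n ω ^ (m + 1)) P :=
    (integrable_const 1).add (hc.integrable_pow hσ hn.le (m + 1))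
  have hint' : Integrable (fun ω => (1 + momentConst κ θ σ m * h) * (1 + Y n ω ^ (m + 1))) P :=
    hint.const_mul _
  have key := hc.integral_le_of_node_le hn (g := g)
    (Φ := fun y => (1 + momentConst κ θ σ m * h) * (1 + y ^ (m + 1)) - 1) (by fun_prop)
    ⟨_, hgb⟩ (hint'.sub (integrable_const 1))
    fun k hk => by
      rw [hnode_eq _ (kuF_le hk), hnode_eq _ (kdF_le.trans (by omega))]
      linarith [puF_mul_pow_add_pdF_mul_pow_le hκ hθ hσ hh hh1 hk m (Y0 := Y0)]
  have hsucc : ∀ ω, g (Y (n + 1) ω) = Y (n + 1) ω ^ (m + 1) := fun ω =>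
    hg_eq _ (hc.mem_Icc hσ hn ω).1 (hc.mem_Icc hσ hn ω).2
  simp only [hsucc] at key
  rw [integral_sub hint' (integrable_const 1), integral_const_mul, integral_const] at key
  rw [integral_add (integrable_const 1) (hc.integrable_pow hσ hn (m + 1)), integral_const]
  simp only [probReal_univ, smul_eq_mul, one_mul] at key ⊢
  linarith

lemma integral_one_add_pow_le [IsProbabilityMeasure P]
    (hc : IsCIRTreeChain κ θ σ Y0 h N P Y) (hκ : 0 ≤ κ) (hθ : 0 ≤ θ) (hσ : 0 ≤ σ)
    (hY0 : 0 ≤ Y0) (hh : 0 ≤ h) (hh1 : h ≤ 1) (hNh : N * h ≤ T) (m : ℕ) (hn : n ≤ N) :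
    ∫ ω, (1 + Y n ω ^ (m + 1)) ∂P ≤ Real.exp (momentConst κ θ σ m * T) * (1 + Y0 ^ (m + 1)) := by
  set K := momentConst κ θ σ m
  have hK : 0 ≤ K := by unfold K momentConst jumpConst; positivity
  have h0 : ∫ ω, (1 + Y 0 ω ^ (m + 1)) ∂P = 1 + Y0 ^ (m + 1) := by
    simp [hc.2.1]
  calc ∫ ω, (1 + Y n ω ^ (m + 1)) ∂P ≤ (1 + K * h) ^ n * (1 + Y0 ^ (m + 1)) := by
        rw [← h0]
        exact le_one_add_pow_mul (u := fun n => ∫ ω, (1 + Y n ω ^ (m + 1)) ∂P) (by positivity)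
          (fun n hn => hc.integral_one_add_pow_succ_le hκ hθ hσ hh hh1 hn m) n hn
    _ ≤ Real.exp (K * h) ^ N * (1 + Y0 ^ (m + 1)) := by
        gcongr
        calc (1 + K * h) ^ n ≤ (1 + K * h) ^ N :=
              pow_le_pow_right₀ (by linarith [mul_nonneg hK hh]) hn
          _ ≤ Real.exp (K * h) ^ N := by
              gcongr; linarith [Real.add_one_le_exp (K * h)]
    _ = Real.exp (K * (N * h)) * (1 + Y0 ^ (m + 1)) := by
        rw [← Real.exp_nat_mul, mul_left_comm]
    _ ≤ Real.exp (K * T) * (1 + Y0 ^ (m + 1)) := by gcongr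

end IsCIRTreeChain

open CIRTree in
theorem stmt_12 (κ θ σ Y0 T : ℝ)
    (hκ : 0 < κ) (hθ : 0 < θ) (hσ : 0 < σ) (hY0 : 0 < Y0) (hT : 0 < T) :
    ∃ hbar : ℝ, 0 < hbar ∧
      ∀ p : ℝ, 1 ≤ p → ∃ C : ℝ, 0 < C ∧
        ∀ N : ℕ, 1 ≤ N → T / N < hbar →
          ∀ (Ω : Type) [MeasurableSpace Ω] (P : Measure Ω) [IsProbabilityMeasure P]
            (Y : ℕ → Ω → ℝ), IsCIRTreeChain κ θ σ Y0 (T / N) N P Y →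
            (∀ n ≤ N, (∫ ω, Y n ω ^ p ∂P) ^ (1 / p) ≤ C) ∧
            ∀ n < N,
              (∫ ω, |Y (n + 1) ω - Y n ω| ^ p ∂P) ^ (1 / p) ≤ C * Real.sqrt (T / N) := by
  refine ⟨1, one_pos, fun p hp => ?_⟩
  set m := ⌈p⌉₊
  have hpm : p ≤ ((m + 1 : ℕ) : ℝ) := by push_cast; linarith [Nat.le_ceil p]
  set D := jumpConst κ θ σ
  set A := Real.exp (momentConst κ θ σ m * T) * (1 + Y0 ^ (m + 1))
  have hD : 0 ≤ D := by unfold D jumpConst; positivity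
  have hA : 1 ≤ A := one_le_mul_of_one_le_of_one_le
    (Real.one_le_exp (by unfold momentConst; positivity)) (by linarith [pow_pos hY0 (m + 1)])
  refine ⟨2 * (1 + D) * A, by positivity, fun N hN hh1 Ω _ P _ Y hc => ?_⟩
  have hh : 0 ≤ T / N := by positivity
  have hNh : (N : ℝ) * (T / N) ≤ T := (mul_div_cancel₀ T (by positivity)).le
  have hmom := fun n (hn : n ≤ N) =>
    hc.integral_one_add_pow_le hκ.le hθ.le hσ.le hY0.le hh hh1.le hNh m hn
  have hW := fun n (hn : n ≤ N) =>
    (integrable_const (1 : ℝ)).add (hc.integrable_pow hσ.le hn (m + 1))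
  refine ⟨fun n hn => ?_, fun n hn => ?_⟩
  · have hY := hc.mem_Icc hσ.le hn
    calc (∫ ω, Y n ω ^ p ∂P) ^ (1 / p) ≤ 2 * 1 * A :=
          integral_rpow_rpow_inv_le hp (by norm_num) hA (fun ω => (hY ω).1) (hW n hn)
            (ae_of_all _ fun ω => rpow_le_of_le_mul_one_add (hY ω).1 (hY ω).1 zero_le_one
              (by linarith) hpm (by linarith)) (hmom n hn)
      _ ≤ 2 * (1 + D) * A := by gcongr; linarith
  · calc (∫ ω, |Y (n + 1) ω - Y n ω| ^ p ∂P) ^ (1 / p) ≤ 2 * (D * √(T / N)) * A :=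
          integral_rpow_rpow_inv_le hp (by positivity) hA (fun ω => abs_nonneg _) (hW n hn.le)
            ((hc.ae_abs_succ_sub_le hκ.le hθ.le hσ.le hh hh1.le hn).mono fun ω hω =>
              rpow_le_of_le_mul_one_add (abs_nonneg _) (hc.mem_Icc hσ.le hn.le ω).1
                (by positivity) (by linarith) hpm hω)
            (hmom n hn.le)
      _ ≤ 2 * (1 + D) * A * √(T / N) := by
          have : 0 ≤ A * √(T / N) := by positivity
          linarith
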